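/- arXiv:1503.00850 — 2 statements merged into one kernel-verified Lean document; each statement's English description precedes it below -/
import Mathlib

section
/- Let X be a complex Banach space with Fourier cotype q ≥ 2 with constant C, i.e., (∑_{k=1}^N ‖x_k‖^q)^{1/q} ≤ C (∫_𝕋 ‖∑_{k=1}^N x_k z^k‖^{q'} dz)^{1/q'} for all finite sequences in X (1/q + 1/q' = 1). Then for every finitely supported family (x_α)_{α ∈ ℕ₀^{(ℕ)}} of vectors in X (with arbitrary, not necessarily homogeneous, multi-indices) one has (∑_α ‖x_α‖^q)^{1/q} ≤ C (∫_{𝕋^N} ‖∑_α x_α z^α‖^{q'} dz)^{1/q'}. -/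
open MeasureTheory

/-- The point `e^{2πit}` on the unit circle `𝕋 ⊆ ℂ`. -/
noncomputable def torus (t : ℝ) : ℂ := Complex.exp (2 * Real.pi * Complex.I * t)

/-- The unit cube `[0,1]^N`, parametrizing `𝕋^N` (with normalized Haar measure = volume). -/
def cube (N : ℕ) : Set (Fin N → ℝ) := Set.univ.pi fun _ => Set.Icc (0:ℝ) 1

/-!
On the curve `z_j = w_j ζ^{b^j}` (`ζ ∈ 𝕋`, fixed `w ∈ 𝕋^N`), with `b` larger than every exponent
occurring, `∑ x_α z^α` becomes the one-variable polynomial `∑ w^α x_α ζ^{∑ α_j b^j}`; its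
exponents are pairwise distinct because base-`b` expansions are unique, so the one-variable
inequality applies on each such curve, with the same left-hand side since `|w^α| = 1`. Averaging
over `w`, rotation invariance of the Haar measure of `𝕋^N` turns the mean over all curves back
into the integral over `𝕋^N`.
-/

open Finset

section Torus

lemma torus_add (s t : ℝ) : torus (s + t) = torus s * torus t := by
  rw [torus, torus, torus, ← Complex.exp_add]
  congr 1; push_cast; ring

lemma torus_mul_natCast (t : ℝ) (n : ℕ) : torus (t * n) = torus t ^ n := by
  rw [torus, torus, ← Complex.exp_nat_mul]
  congr 1; push_cast; ring

lemma norm_torus (t : ℝ) : ‖torus t‖ = 1 := by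
  rw [torus, show (2 * Real.pi * Complex.I * t : ℂ) = ((2 * Real.pi * t : ℝ) : ℂ) * Complex.I by
    push_cast; ring, Complex.norm_exp_ofReal_mul_I]

lemma coe_toCircle_coe (t : ℝ) :
    ((AddCircle.toCircle (t : AddCircle (1:ℝ)) : Circle) : ℂ) = torus t := by
  rw [AddCircle.toCircle_apply_mk, Circle.coe_exp, torus]
  congr 1; push_cast; ring

lemma norm_prod_torus_pow {N : ℕ} (s : Fin N → ℝ) (α : Fin N → ℕ) :
    ‖∏ j, torus (s j) ^ α j‖ = 1 := by
  simp [norm_prod, norm_torus]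

lemma prod_torus_add_mul_pow {N : ℕ} (b : ℕ) (s : Fin N → ℝ) (t : ℝ) (α : Fin N → ℕ) :
    ∏ j, torus (s j + t * (b : ℝ) ^ (j : ℕ)) ^ α j
      = (∏ j, torus (s j) ^ α j) * torus t ^ (∑ j, α j * b ^ (j : ℕ)) := by
  rw [← prod_pow_eq_pow_sum, ← prod_mul_distrib]
  refine prod_congr rfl fun j _ => ?_
  rw [torus_add, show t * (b : ℝ) ^ (j : ℕ) = t * ((b ^ (j : ℕ) : ℕ) : ℝ) by push_cast; ring,
    torus_mul_natCast, mul_pow, ← pow_mul, mul_comm (b ^ (j : ℕ))]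

end Torus

section BaseExpansion

variable {b N : ℕ}

lemma sum_mul_pow_lt_pow {α : Fin N → ℕ} (hα : ∀ j, α j < b) :
    ∑ j, α j * b ^ (j : ℕ) < b ^ N := by
  simpa [finFunctionFinEquiv_apply] using (finFunctionFinEquiv fun j => (⟨α j, hα j⟩ : Fin b)).isLt

lemma injOn_sum_mul_pow :
    Set.InjOn (fun α : Fin N → ℕ => ∑ j, α j * b ^ (j : ℕ)) {α | ∀ j, α j < b} := by
  intro α hα β hβ h
  have hdigits : (fun j => (⟨α j, hα j⟩ : Fin b)) = fun j => ⟨β j, hβ j⟩ :=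
    finFunctionFinEquiv.injective (Fin.ext (by simpa [finFunctionFinEquiv_apply] using h))
  funext j
  exact congrArg Fin.val (congrFun hdigits j)

end BaseExpansion

section Fibers

variable {ι κ E : Type*} [DecidableEq κ] {A : Finset ι} {S : Finset κ} {e : ι → κ}

lemma sum_comp_sum_fiber_of_injOn [AddCommMonoid E] {F : Type*} [AddCommMonoid F]
    (he : Set.InjOn e A) (hmaps : ∀ α ∈ A, e α ∈ S) (v : ι → E) {g : E → F} (hg : g 0 = 0) :
    ∑ k ∈ S, g (∑ α ∈ A with e α = k, v α) = ∑ α ∈ A, g (v α) := by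
  rw [← sum_fiberwise_of_maps_to hmaps]
  refine sum_congr rfl fun k _ => ?_
  rcases (A.filter (e · = k)).eq_empty_or_nonempty with hempty | ⟨α, hα⟩
  · simp [hempty, hg]
  · have hsingle : A.filter (e · = k) = {α} := by
      refine eq_singleton_iff_unique_mem.mpr ⟨hα, fun β hβ => ?_⟩
      rw [mem_filter] at hα hβ
      exact he hβ.1 hα.1 (hβ.2.trans hα.2.symm)
    simp [hsingle]

lemma sum_smul_sum_fiber {R : Type*} [Semiring R] [AddCommMonoid E] [Module R E]
    (hmaps : ∀ α ∈ A, e α ∈ S) (f : κ → R) (v : ι → E) :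
    ∑ k ∈ S, f k • ∑ α ∈ A with e α = k, v α = ∑ α ∈ A, f (e α) • v α := by
  rw [← sum_fiberwise_of_maps_to hmaps]
  refine sum_congr rfl fun k _ => ?_
  rw [smul_sum]
  exact sum_congr rfl fun α hα => by rw [(mem_filter.mp hα).2]

end Fibers

section Averaging

variable {N : ℕ}

lemma restrict_cube :
    (volume : Measure (Fin N → ℝ)).restrict (cube N)
      = Measure.pi fun _ => (volume : Measure ℝ).restrict (Set.Icc 0 1) := by
  rw [cube, volume_pi, Measure.restrict_pi_pi]

instance isProbabilityMeasure_restrict_cube :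
    IsProbabilityMeasure ((volume : Measure (Fin N → ℝ)).restrict (cube N)) := by
  rw [restrict_cube]
  have : IsProbabilityMeasure ((volume : Measure ℝ).restrict (Set.Icc 0 1)) :=
    ⟨by simp [Real.volume_Icc]⟩
  infer_instance

lemma setIntegral_cube_eq_integral {G : (Fin N → AddCircle (1:ℝ)) → ℝ} (hG : Continuous G) :
    ∫ s in cube N, G (fun j => (s j : AddCircle (1:ℝ))) = ∫ u, G u := by
  have hmp : MeasurePreserving (fun (s : Fin N → ℝ) (j : Fin N) => (s j : AddCircle (1:ℝ)))
      (Measure.pi fun _ => (volume : Measure ℝ).restrict (Set.Ioc 0 1)) volume :=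
    measurePreserving_pi _ _ fun _ => by simpa using AddCircle.measurePreserving_mk 1 0
  rw [restrict_cube, Measure.restrict_congr_set Ioc_ae_eq_Icc.symm, ← hmp.map_eq,
    integral_map hmp.aemeasurable hG.aestronglyMeasurable]

lemma setIntegral_cube_comp_add {G : (Fin N → AddCircle (1:ℝ)) → ℝ} (hG : Continuous G)
    (v : Fin N → ℝ) :
    ∫ s in cube N, G (fun j => ((s j + v j : ℝ) : AddCircle (1:ℝ)))
      = ∫ s in cube N, G (fun j => (s j : AddCircle (1:ℝ))) := by
  have hshift : Continuous fun u => G ((fun j => (v j : AddCircle (1:ℝ))) + u) := by fun_prop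
  simp_rw [setIntegral_cube_eq_integral hG, ← integral_add_left_eq_self G
    (fun j => (v j : AddCircle (1:ℝ))), ← setIntegral_cube_eq_integral hshift]
  refine integral_congr_ae (.of_forall fun s => congrArg G (funext fun j => ?_))
  simp [add_comm]

lemma le_setIntegral_cube_of_le_setIntegral_line {G : (Fin N → AddCircle (1:ℝ)) → ℝ}
    (hG : Continuous G) (c : Fin N → ℝ) {a : ℝ}
    (h : ∀ s : Fin N → ℝ,
      a ≤ ∫ t in Set.Icc (0:ℝ) 1, G (fun j => ((s j + t * c j : ℝ) : AddCircle (1:ℝ)))) :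
    a ≤ ∫ s in cube N, G (fun j => (s j : AddCircle (1:ℝ))) := by
  set H : (Fin N → ℝ) → ℝ → ℝ := fun s t => G (fun j => ((s j + t * c j : ℝ) : AddCircle (1:ℝ)))
  have hH : Integrable (Function.uncurry H)
      ((volume.restrict (cube N)).prod (volume.restrict (Set.Icc (0:ℝ) 1))) := by
    obtain ⟨K, hK⟩ := isCompact_univ.exists_bound_of_continuousOn hG.continuousOn
    exact .of_bound (by fun_prop) K (.of_forall fun _ => hK _ (Set.mem_univ _))
  calc a = ∫ _ in cube N, a := by simp
    _ ≤ ∫ s in cube N, ∫ t in Set.Icc (0:ℝ) 1, H s t :=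
      integral_mono (integrable_const a) hH.integral_prod_left h
    _ = ∫ t in Set.Icc (0:ℝ) 1, ∫ s in cube N, H s t := integral_integral_swap hH
    _ = ∫ t in Set.Icc (0:ℝ) 1, ∫ s in cube N, G (fun j => (s j : AddCircle (1:ℝ))) :=
      integral_congr_ae (.of_forall fun t => setIntegral_cube_comp_add hG (t • c))
    _ = ∫ s in cube N, G (fun j => (s j : AddCircle (1:ℝ))) := by simp

end Averaging

def HasFourierCotype (X : Type*) [NormedAddCommGroup X] [NormedSpace ℂ X] (q q' C : ℝ) : Prop :=
  ∀ (M : ℕ) (x : ℕ → X),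
    (∑ k ∈ Icc 1 M, ‖x k‖ ^ q) ^ (1/q)
      ≤ C * (∫ t in Set.Icc (0:ℝ) 1, ‖∑ k ∈ Icc 1 M, (torus t) ^ k • x k‖ ^ q') ^ (1/q')

lemma HasFourierCotype.le_setIntegral_line {X : Type*} [NormedAddCommGroup X] [NormedSpace ℂ X]
    {q q' C : ℝ} (hX : HasFourierCotype X q q' C) (hq : q ≠ 0) {N b : ℕ}
    {A : Finset (Fin N → ℕ)} (hb : ∀ α ∈ A, ∀ j, α j < b) (x : (Fin N → ℕ) → X)
    (s : Fin N → ℝ) :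
    (∑ α ∈ A, ‖x α‖ ^ q) ^ (1/q)
      ≤ C * (∫ t in Set.Icc (0:ℝ) 1,
          ‖∑ α ∈ A, (∏ j, torus (s j + t * (b : ℝ) ^ (j : ℕ)) ^ α j) • x α‖ ^ q') ^ (1/q') := by
  -- shifted by one because the one-variable inequality starts at `ζ¹`
  set e : (Fin N → ℕ) → ℕ := fun α => ∑ j, α j * b ^ (j : ℕ) + 1
  set w : (Fin N → ℕ) → ℂ := fun α => ∏ j, torus (s j) ^ α j
  have he : Set.InjOn e A := fun α hα β hβ h =>
    injOn_sum_mul_pow (hb α hα) (hb β hβ) (Nat.add_right_cancel h)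
  have hmaps : ∀ α ∈ A, e α ∈ Icc 1 (b ^ N) := fun α hα =>
    mem_Icc.mpr ⟨Nat.le_add_left _ _, sum_mul_pow_lt_pow (hb α hα)⟩
  set y : ℕ → X := fun k => ∑ α ∈ A with e α = k, w α • x α
  have hnorm : ∑ k ∈ Icc 1 (b ^ N), ‖y k‖ ^ q = ∑ α ∈ A, ‖x α‖ ^ q := by
    rw [sum_comp_sum_fiber_of_injOn he hmaps _ (g := fun v => ‖v‖ ^ q) (by simp [hq])]
    simp only [w, norm_smul, norm_prod_torus_pow, one_mul]
  have hpoly : ∀ t : ℝ, ∑ k ∈ Icc 1 (b ^ N), torus t ^ k • y k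
      = torus t • ∑ α ∈ A, (∏ j, torus (s j + t * (b : ℝ) ^ (j : ℕ)) ^ α j) • x α := by
    intro t
    rw [sum_smul_sum_fiber hmaps, smul_sum]
    refine sum_congr rfl fun α _ => ?_
    rw [prod_torus_add_mul_pow, smul_smul, smul_smul]
    simp only [e, w]
    generalize ∑ j, α j * b ^ (j : ℕ) = n
    congr 1
    ring
  simpa only [hnorm, hpoly, norm_smul, norm_torus, one_mul] using hX (b ^ N) y

lemma le_mul_rpow_one_div_iff {a C J p : ℝ} (ha : 0 ≤ a) (hC : 0 < C) (hJ : 0 ≤ J) (hp : 0 < p) :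
    a ≤ C * J ^ (1 / p) ↔ (a / C) ^ p ≤ J := by
  rw [← div_le_iff₀' hC, one_div, Real.le_rpow_inv_iff_of_pos (div_nonneg ha hC.le) hJ hp]

theorem fourier_cotype_implies_analytic_cotype_general
    (X : Type*) [NormedAddCommGroup X] [NormedSpace ℂ X]
    (q q' : ℝ) (hq : 2 ≤ q) (hq' : 1/q + 1/q' = 1) (C : ℝ) (hC : 0 < C)
    (hfour : ∀ (M : ℕ) (x : ℕ → X),
      (∑ k ∈ Finset.Icc 1 M, ‖x k‖ ^ q) ^ (1/q)
        ≤ C * (∫ t in Set.Icc (0:ℝ) 1,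
            ‖∑ k ∈ Finset.Icc 1 M, (torus t) ^ k • x k‖ ^ q') ^ (1/q')) :
    ∀ (N : ℕ) (A : Finset (Fin N → ℕ)) (x : (Fin N → ℕ) → X),
      (∑ α ∈ A, ‖x α‖ ^ q) ^ (1/q)
        ≤ C * (∫ t in cube N, ‖∑ α ∈ A, (∏ j, torus (t j) ^ α j) • x α‖ ^ q') ^ (1/q') := by
  intro N A x
  have hq'_pos : 0 < q' := one_div_pos.mp (by linarith [one_div_le_one_div_of_le two_pos hq])
  obtain ⟨b, hb⟩ : ∃ b : ℕ, ∀ α ∈ A, ∀ j, α j < b :=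
    ⟨A.sup (fun α => univ.sup α) + 1, fun α hα j =>
      Nat.lt_succ_of_le ((le_sup (mem_univ j)).trans (le_sup (f := fun α => univ.sup α) hα))⟩
  set G : (Fin N → AddCircle (1:ℝ)) → ℝ := fun u =>
    ‖∑ α ∈ A, (∏ j, ((AddCircle.toCircle (u j) : Circle) : ℂ) ^ α j) • x α‖ ^ q'
  have hG : Continuous G := (by fun_prop : Continuous _).rpow_const fun _ => .inr hq'_pos.le
  set L := (∑ α ∈ A, ‖x α‖ ^ q) ^ (1 / q)
  have hL : 0 ≤ L := by positivity
  have hline (s : Fin N → ℝ) :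
      (L / C) ^ q' ≤ ∫ t in Set.Icc (0:ℝ) 1,
        G (fun j => ((s j + t * (b : ℝ) ^ (j : ℕ) : ℝ) : AddCircle (1:ℝ))) := by
    rw [← le_mul_rpow_one_div_iff hL hC (by positivity) hq'_pos]
    simpa only [G, coe_toCircle_coe] using
      HasFourierCotype.le_setIntegral_line hfour (by linarith) hb x s
  have hcube : ∫ s in cube N, G (fun j => (s j : AddCircle (1:ℝ)))
      = ∫ t in cube N, ‖∑ α ∈ A, (∏ j, torus (t j) ^ α j) • x α‖ ^ q' := by
    simp only [G, coe_toCircle_coe]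
  rw [le_mul_rpow_one_div_iff hL hC (by positivity) hq'_pos, ← hcube]
  exact le_setIntegral_cube_of_le_setIntegral_line hG _ hline

/-- If `X` has Fourier cotype `q ≥ 2` with constant `C` (one-variable inequality), then the
analogous inequality, with the same constant `C`, holds for every finitely supported family of
coefficients indexed by arbitrary multi-indices (not necessarily homogeneous). -/
theorem fourier_cotype_implies_analytic_cotype
    (X : Type*) [NormedAddCommGroup X] [NormedSpace ℂ X] [CompleteSpace X]
    (q q' : ℝ) (hq : 2 ≤ q) (hq' : 1/q + 1/q' = 1) (C : ℝ) (hC : 0 < C)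
    (hfour : ∀ (M : ℕ) (x : ℕ → X),
      (∑ k ∈ Finset.Icc 1 M, ‖x k‖ ^ q) ^ (1/q)
        ≤ C * (∫ t in Set.Icc (0:ℝ) 1,
            ‖∑ k ∈ Finset.Icc 1 M, (torus t) ^ k • x k‖ ^ q') ^ (1/q')) :
    ∀ (N : ℕ) (A : Finset (Fin N → ℕ)) (x : (Fin N → ℕ) → X),
      (∑ α ∈ A, ‖x α‖ ^ q) ^ (1/q)
        ≤ C * (∫ t in cube N, ‖∑ α ∈ A, (∏ j, torus (t j) ^ α j) • x α‖ ^ q') ^ (1/q') :=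
  fourier_cotype_implies_analytic_cotype_general X q q' hq hq' C hC hfour
end

section
/- A sequence z ∈ ℂ^ℕ satisfies ∑_{α ∈ ℕ₀^{(ℕ)}} |z^α| < ∞ if and only if z ∈ ℓ₁ and ‖z‖_∞ < 1 (i.e., z ∈ ℓ₁ ∩ B_{c₀}). -/
open Finset Filter

private lemma single_prod_pow (r : ℕ → ℝ) (j k : ℕ) :
    (Finsupp.single j k).prod (fun i m => r i ^ m) = r j ^ k :=
  Finsupp.prod_single_index (pow_zero _)

/-- For `z ∈ ℂ^ℕ`: `∑_{α ∈ ℕ₀^{(ℕ)}} |z^α| < ∞` if and only if `z ∈ ℓ₁` and `‖z‖_∞ < 1`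
(i.e. `z ∈ ℓ₁ ∩ B_{c₀}`). Multi-indices `α` range over all finitely supported `ℕ →₀ ℕ`
and `z^α = ∏_j z_j^{α_j}`. -/
theorem monomial_abs_summable_iff (z : ℕ → ℂ) :
    Summable (fun α : ℕ →₀ ℕ => α.prod fun j k => ‖z j‖ ^ k) ↔
      (Summable fun j => ‖z j‖) ∧ (⨆ j, ‖z j‖) < 1 := by
  set r : ℕ → ℝ := fun j => ‖z j‖ with hrdef
  have hr0 : ∀ j, 0 ≤ r j := fun j => norm_nonneg _
  constructor
  · intro H
    have hsum : Summable r := by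
      have h1 : Summable (fun j => (Finsupp.single j 1).prod fun i m => r i ^ m) :=
        H.comp_injective (Finsupp.single_left_injective one_ne_zero)
      simpa [single_prod_pow] using h1
    refine ⟨hsum, ?_⟩
    have hlt : ∀ j, r j < 1 := by
      intro j
      have h2 : Summable (fun k => (Finsupp.single j k).prod fun i m => r i ^ m) :=
        H.comp_injective (Finsupp.single_injective j)
      have h3 : Summable (fun k : ℕ => r j ^ k) := by simpa [single_prod_pow] using h2
      have h4 := summable_geometric_iff_norm_lt_one.mp h3
      rwa [Real.norm_eq_abs, abs_of_nonneg (hr0 j)] at h4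
    have htend : Tendsto r atTop (nhds 0) := hsum.tendsto_atTop_zero
    obtain ⟨N, hN⟩ := eventually_atTop.mp
      (htend.eventually_lt_const (by norm_num : (0:ℝ) < 1/2))
    set b : ℝ := max (1/2) ((Finset.range (N+1)).sup' (by simp) r) with hbdef
    have hble : ∀ j, r j ≤ b := by
      intro j
      rcases le_or_gt j N with h | h
      · exact le_max_of_le_right (Finset.le_sup' r (by simp [Finset.mem_range]; omega))
      · exact le_max_of_le_left (hN j h.le).le
    have hb1 : b < 1 :=
      max_lt (by norm_num) ((Finset.sup'_lt_iff _).mpr fun j _ => hlt j)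
    exact lt_of_le_of_lt (ciSup_le hble) hb1
  · rintro ⟨hsum, hc⟩
    set c : ℝ := ⨆ j, r j with hcdef
    have hbdd : BddAbove (Set.range r) := hsum.tendsto_atTop_zero.bddAbove_range
    have hrc : ∀ j, r j ≤ c := fun j => le_ciSup hbdd j
    have hc0 : 0 ≤ c := le_trans (hr0 0) (hrc 0)
    have h1c : (0:ℝ) < 1 - c := by linarith
    have hrlt : ∀ j, r j < 1 := fun j => lt_of_le_of_lt (hrc j) hc
    set T : ℝ := ∑' j, r j with hTdef
    have hfnn : ∀ α : ℕ →₀ ℕ, 0 ≤ α.prod fun j k => r j ^ k := fun α =>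
      Finset.prod_nonneg fun i _ => pow_nonneg (hr0 i) _
    apply summable_of_sum_le hfnn
    intro u
    set s : Finset ℕ := u.sup Finsupp.support with hsdef
    set M : ℕ := u.sup (fun α => s.sup fun i => α i) with hMdef
    -- rewrite each term as a product over s
    have hf : ∀ α ∈ u, α.prod (fun j k => r j ^ k) = ∏ j ∈ s, r j ^ α j := by
      intro α hα
      rw [Finsupp.prod]
      refine Finset.prod_subset (Finset.le_sup hα) ?_
      intro j _ hjs
      rw [Finsupp.notMem_support_iff.mp hjs, pow_zero]
    -- the injection into the pi finset
    set Φ : (ℕ →₀ ℕ) → ((a : ℕ) → a ∈ s → ℕ) := fun α a _ => α a with hΦdef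
    have hΦinj : ∀ α ∈ u, ∀ β ∈ u, Φ α = Φ β → α = β := by
      intro α hα β hβ h
      ext a
      by_cases ha : a ∈ s
      · exact congrFun (congrFun h a) ha
      · have h1 : a ∉ α.support := fun hmem => ha (Finset.mem_of_subset (Finset.le_sup hα) hmem)
        have h2 : a ∉ β.support := fun hmem => ha (Finset.mem_of_subset (Finset.le_sup hβ) hmem)
        rw [Finsupp.notMem_support_iff.mp h1, Finsupp.notMem_support_iff.mp h2]
    have hsubset : u.image Φ ⊆ s.pi (fun _ => Finset.range (M+1)) := by
      intro p hp
      rcases Finset.mem_image.mp hp with ⟨α, hα, rfl⟩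
      rw [Finset.mem_pi]
      intro a ha
      rw [Finset.mem_range, Nat.lt_succ_iff]
      exact le_trans (Finset.le_sup (f := fun i => α i) ha) (Finset.le_sup (f := fun α : ℕ →₀ ℕ => s.sup fun i => α i) hα)
    have key1 : ∑ α ∈ u, α.prod (fun j k => r j ^ k)
        ≤ ∏ j ∈ s, ∑ k ∈ Finset.range (M+1), r j ^ k := by
      rw [Finset.prod_sum]
      calc ∑ α ∈ u, α.prod (fun j k => r j ^ k)
          = ∑ p ∈ u.image Φ, ∏ x ∈ s.attach, r x.1 ^ p x.1 x.2 := by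
            rw [Finset.sum_image hΦinj]
            refine Finset.sum_congr rfl fun α hα => ?_
            rw [hf α hα]
            exact (Finset.prod_attach s fun j => r j ^ α j).symm
        _ ≤ ∑ p ∈ s.pi (fun _ => Finset.range (M+1)), ∏ x ∈ s.attach, r x.1 ^ p x.1 x.2 := by
            refine Finset.sum_le_sum_of_subset_of_nonneg hsubset fun p _ _ => ?_
            exact Finset.prod_nonneg fun x _ => pow_nonneg (hr0 x.1) _
    have key2 : ∏ j ∈ s, ∑ k ∈ Finset.range (M+1), r j ^ k
        ≤ ∏ j ∈ s, Real.exp (r j / (1 - c)) := by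
      refine Finset.prod_le_prod (fun j _ => Finset.sum_nonneg fun k _ => pow_nonneg (hr0 j) _)
        (fun j _ => ?_)
      have h2 : (0:ℝ) < 1 - r j := by linarith [hrlt j]
      calc ∑ k ∈ Finset.range (M+1), r j ^ k
          ≤ ∑' k : ℕ, r j ^ k :=
            Summable.sum_le_tsum _ (fun k _ => pow_nonneg (hr0 j) k)
              (summable_geometric_of_lt_one (hr0 j) (hrlt j))
        _ = (1 - r j)⁻¹ := tsum_geometric_of_lt_one (hr0 j) (hrlt j)
        _ ≤ 1 + r j / (1 - c) := by
            rw [inv_eq_one_div, div_le_iff₀ h2]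
            have expand : (1 + r j / (1 - c)) * (1 - r j)
                = 1 + (r j * (c - r j)) / (1 - c) := by
              field_simp
              ring
            rw [expand]
            have hnn : 0 ≤ (r j * (c - r j)) / (1 - c) :=
              div_nonneg (mul_nonneg (hr0 j) (by linarith [hrc j])) h1c.le
            linarith
        _ ≤ Real.exp (r j / (1 - c)) := by
            have := Real.add_one_le_exp (r j / (1 - c))
            linarith
    have key3 : ∏ j ∈ s, Real.exp (r j / (1 - c)) ≤ Real.exp (T / (1 - c)) := by
      rw [← Real.exp_sum]
      refine Real.exp_le_exp.mpr ?_
      rw [← Finset.sum_div, div_le_div_iff_of_pos_right h1c]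
      exact Summable.sum_le_tsum s (fun j _ => hr0 j) hsum
    exact le_trans key1 (le_trans key2 key3)
end
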